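/- arXiv:2507.23075 — 4 statements merged into one kernel-verified Lean document; each statement's English description precedes it below -/
import Mathlib

section
/- For all natural numbers j and k, the polynomial function (X,Y) ↦ tr(X^j · Y^k) on M_n(ℂ) × M_n(ℂ) belongs to the ℂ-subalgebra of polynomial functions on M_n(ℂ) × M_n(ℂ) generated by the finite set {(X,Y) ↦ tr(X^a · Y^b) : 0 ≤ a ≤ n, 0 ≤ b ≤ n}. -/
open MvPolynomial Matrix

/-- Polynomial functions on `M_n(ℂ) × M_n(ℂ)`, represented as polynomials in the
entries of the two matrices. -/
abbrev PolyFun (n : ℕ) := MvPolynomial ((Fin n × Fin n) ⊕ (Fin n × Fin n)) ℂ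

/-- The matrix of coordinate functions `X_{jk}`. -/
noncomputable def Xmat (n : ℕ) : Matrix (Fin n) (Fin n) (PolyFun n) :=
  fun i j => MvPolynomial.X (Sum.inl (i, j))

/-- The matrix of coordinate functions `Y_{jk}`. -/
noncomputable def Ymat (n : ℕ) : Matrix (Fin n) (Fin n) (PolyFun n) :=
  fun i j => MvPolynomial.X (Sum.inr (i, j))

/-- Traceless part `A = X - (tr X / n) I_n`. -/
noncomputable def Amat (n : ℕ) : Matrix (Fin n) (Fin n) (PolyFun n) :=
  Xmat n - (MvPolynomial.C ((n : ℂ)⁻¹) * Matrix.trace (Xmat n)) • (1 : Matrix (Fin n) (Fin n) (PolyFun n))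

/-- Traceless part `B = Y - (tr Y / n) I_n`. -/
noncomputable def Bmat (n : ℕ) : Matrix (Fin n) (Fin n) (PolyFun n) :=
  Ymat n - (MvPolynomial.C ((n : ℂ)⁻¹) * Matrix.trace (Ymat n)) • (1 : Matrix (Fin n) (Fin n) (PolyFun n))

/-- The polynomial function `(X,Y) ↦ tr (A^p B^q)`. -/
noncomputable def trAB (n p q : ℕ) : PolyFun n :=
  Matrix.trace (Amat n ^ p * Bmat n ^ q)

/-- The polynomial function `(X,Y) ↦ tr (X^a Y^b)`. -/
noncomputable def trXY (n a b : ℕ) : PolyFun n :=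
  Matrix.trace (Xmat n ^ a * Ymat n ^ b)

/-- The Poisson bracket
`{F,G} = Σ_{j,k} ∂F/∂X_{jk} ∂G/∂Y_{kj} − ∂F/∂Y_{jk} ∂G/∂X_{kj}`. -/
noncomputable def pbracket {n : ℕ} (F G : PolyFun n) : PolyFun n :=
  ∑ j : Fin n, ∑ k : Fin n,
    (MvPolynomial.pderiv (Sum.inl (j, k)) F * MvPolynomial.pderiv (Sum.inr (k, j)) G
      - MvPolynomial.pderiv (Sum.inr (j, k)) F * MvPolynomial.pderiv (Sum.inl (k, j)) G)

/-- Evaluation of a polynomial function at a pair of matrices. -/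
noncomputable def evalP {n : ℕ} (X Y : Matrix (Fin n) (Fin n) ℂ) (F : PolyFun n) : ℂ :=
  MvPolynomial.eval (Sum.elim (fun p => X p.1 p.2) (fun p => Y p.1 p.2)) F

/-- The Calogero–Moser variety `Ĉ_n = {(X,Y) : rank([X,Y] − i I_n) = 1}`. -/
def Chat (n : ℕ) : Set (Matrix (Fin n) (Fin n) ℂ × Matrix (Fin n) (Fin n) ℂ) :=
  {P | ((P.1 * P.2 - P.2 * P.1) - Complex.I • (1 : Matrix (Fin n) (Fin n) ℂ)).rank = 1}

/-- The traceless Calogero–Moser variety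
`Ŝ_n = {(X,Y) : tr X = tr Y = 0, rank([X,Y] − i I_n) = 1}`. -/
def Shat (n : ℕ) : Set (Matrix (Fin n) (Fin n) ℂ × Matrix (Fin n) (Fin n) ℂ) :=
  {P | Matrix.trace P.1 = 0 ∧ Matrix.trace P.2 = 0 ∧
    ((P.1 * P.2 - P.2 * P.1) - Complex.I • (1 : Matrix (Fin n) (Fin n) ℂ)).rank = 1}

/-- The set `ℱ = {tr A², tr B², tr A³, (tr AB)²}`. -/
noncomputable def calF (n : ℕ) : Set (PolyFun n) :=
  {trAB n 2 0, trAB n 0 2, trAB n 3 0, (trAB n 1 1) ^ 2}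

/-- The smallest ℂ-linear subspace of the polynomial functions containing `S`
and closed under the Poisson bracket. -/
inductive LieGen (n : ℕ) (S : Set (PolyFun n)) : PolyFun n → Prop
  | base {f : PolyFun n} : f ∈ S → LieGen n S f
  | zero : LieGen n S 0
  | add {f g : PolyFun n} : LieGen n S f → LieGen n S g → LieGen n S (f + g)
  | smul (c : ℂ) {f : PolyFun n} : LieGen n S f → LieGen n S (c • f)
  | bracket {f g : PolyFun n} : LieGen n S f → LieGen n S g → LieGen n S (pbracket f g)

/-!
By Cayley–Hamilton, `X ^ j` and `Y ^ k` are linear combinations of `X ^ 0, …, X ^ n` and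
`Y ^ 0, …, Y ^ n` with coefficients in the ring generated by the coefficients of the
characteristic polynomials of `X` and `Y`, so `tr (X ^ j * Y ^ k)` is such a combination of the
generators `tr (X ^ a * Y ^ b)`. The characteristic polynomial coefficients are, up to sign, the
elementary symmetric functions of the eigenvalues, and in characteristic zero Newton's identities
write these as polynomials in the power sums `tr X ^ a`, `a ≤ n`. The eigenvalues live in an
algebraic closure of the fraction field of the polynomial ring, into which the ring embeds.
-/

namespace Module.End
variable {K V : Type*} [Field K] [AddCommGroup V] [Module K V] [FiniteDimensional K V]

theorem trace_restrict_pow_maxGenEigenspace (f : End K V) (μ : K) (m : ℕ)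
    (h : Set.MapsTo (f ^ m) (f.maxGenEigenspace μ) (f.maxGenEigenspace μ)) :
    LinearMap.trace K _ ((f ^ m).restrict h) = μ ^ m * f.charpoly.rootMultiplicity μ := by
  induction m with
  | zero =>
    have hid : (f ^ 0).restrict h = LinearMap.id := by ext; rfl
    rw [hid, LinearMap.trace_id, LinearMap.finrank_maxGenEigenspace_eq, pow_zero, one_mul]
  | succ m ih =>
    have hf := f.mapsTo_maxGenEigenspace_of_comm (Commute.refl f) μ
    have hm := f.mapsTo_maxGenEigenspace_of_comm (Commute.pow_right (Commute.refl f) m) μ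
    have hsplit : (f ^ (m + 1)).restrict h = (f ^ m).restrict hm ∘ₗ f.restrict hf := by
      ext; rfl
    have hcomm : Commute ((f ^ m).restrict hm) (f.restrict hf) :=
      LinearMap.restrict_commute (Commute.pow_left (Commute.refl f) m) _ _
    rw [hsplit, LinearMap.trace_comp_eq_mul_of_commute_of_isNilpotent μ hcomm
      (f.isNilpotent_restrict_maxGenEigenspace_sub_algebraMap μ), ih, pow_succ]
    ring

theorem trace_pow_eq_sum_roots_charpoly [IsAlgClosed K] (f : End K V) (m : ℕ) :
    LinearMap.trace K V (f ^ m) = (f.charpoly.roots.map (· ^ m)).sum := by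
  classical
  have hint := DirectSum.isInternal_submodule_of_iSupIndep_of_iSup_eq_top
    f.independent_maxGenEigenspace f.iSup_maxGenEigenspace_eq_top
  have hfin : {μ | f.maxGenEigenspace μ ≠ ⊥}.Finite :=
    WellFoundedGT.finite_ne_bot_of_iSupIndep f.independent_maxGenEigenspace
  have hsupp : hfin.toFinset = f.charpoly.roots.toFinset := by
    ext μ
    simp [← Submodule.finrank_eq_zero.not, LinearMap.finrank_maxGenEigenspace_eq,
      (LinearMap.charpoly_monic f).ne_zero]
  rw [LinearMap.trace_eq_sum_trace_restrict' hint hfin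
      (fun μ => f.mapsTo_maxGenEigenspace_of_comm (Commute.pow_right (Commute.refl f) m) μ),
    Finset.sum_multiset_map_count, hsupp]
  refine Finset.sum_congr rfl fun μ _ => ?_
  rw [trace_restrict_pow_maxGenEigenspace, Polynomial.count_roots, nsmul_eq_mul, mul_comm]

end Module.End

namespace MvPolynomial

theorem esymm_mem_adjoin_psum (σ K : Type*) [Fintype σ] [Field K] [CharZero K] (k : ℕ) :
    esymm σ K k ∈ Algebra.adjoin K (psum σ K '' Set.Iic k) := by
  induction k using Nat.strong_induction_on with
  | _ k ih =>
  rcases k with _ | k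
  · rw [esymm_zero]
    exact one_mem _
  set S := Algebra.adjoin K (psum σ K '' Set.Iic (k + 1))
  have hsum : ((k + 1 : ℕ) : MvPolynomial σ K) * esymm σ K (k + 1) ∈ S := by
    rw [mul_esymm_eq_sum]
    refine mul_mem (pow_mem (neg_mem (one_mem _)) _) (sum_mem fun a ha => ?_)
    obtain ⟨hmem, hlt⟩ := Finset.mem_filter.1 ha
    have hle : a.2 ≤ k + 1 := by rw [Finset.HasAntidiagonal.mem_antidiagonal] at hmem; omega
    refine mul_mem (mul_mem (pow_mem (neg_mem (one_mem _)) _) ?_) ?_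
    · exact Algebra.adjoin_mono (Set.image_mono (Set.Iic_subset_Iic.2 hlt.le)) (ih a.1 hlt)
    · exact Algebra.subset_adjoin ⟨a.2, hle, rfl⟩
  have hk : ((k + 1 : ℕ) : K) ≠ 0 := Nat.cast_ne_zero.2 k.succ_ne_zero
  convert S.smul_mem hsum ((k + 1 : ℕ) : K)⁻¹ using 1
  rw [Algebra.smul_def, ← mul_assoc, ← map_natCast (algebraMap K (MvPolynomial σ K)),
    ← map_mul, inv_mul_cancel₀ hk, map_one, one_mul]

end MvPolynomial

theorem Multiset.esymm_mem_adjoin_sum_map_pow {K L : Type*} [Field K] [CharZero K] [CommRing L]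
    [Algebra K L] (s : Multiset L) (k : ℕ) :
    s.esymm k ∈ Algebra.adjoin K ((fun i => (s.map (· ^ i)).sum) '' Set.Iic k) := by
  classical
  set f : s → L := fun x => x
  have hesymm : MvPolynomial.aeval f (MvPolynomial.esymm s K k) = s.esymm k := by
    rw [MvPolynomial.aeval_esymm_eq_multiset_esymm, Multiset.map_univ_coe]
  have hpsum : ∀ i, MvPolynomial.aeval f (MvPolynomial.psum s K i) = (s.map (· ^ i)).sum := by
    intro i
    rw [MvPolynomial.psum, map_sum, Finset.sum_eq_multiset_sum]
    simp only [map_pow, MvPolynomial.aeval_X, f]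
    exact congrArg Multiset.sum (Multiset.map_univ s (· ^ i))
  have himage : (fun i => (s.map (· ^ i)).sum) '' Set.Iic k =
      MvPolynomial.aeval f '' (MvPolynomial.psum s K '' Set.Iic k) := by
    simp only [Set.image_image, hpsum]
  rw [himage, Algebra.adjoin_image, ← hesymm]
  exact Subalgebra.mem_map.2 ⟨_, MvPolynomial.esymm_mem_adjoin_psum s K k, rfl⟩

namespace Matrix
variable {n : Type*} [Fintype n] [DecidableEq n]

theorem trace_pow_eq_sum_roots_charpoly {L : Type*} [Field L] [IsAlgClosed L] (M : Matrix n n L)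
    (m : ℕ) :
    (M ^ m).trace = (M.charpoly.roots.map (· ^ m)).sum := by
  rw [← trace_toLin'_eq, toLin'_pow, Module.End.trace_pow_eq_sum_roots_charpoly, charpoly_toLin']

theorem charpoly_coeff_mem_adjoin_trace_pow_of_isAlgClosed {K L : Type*} [Field K] [CharZero K]
    [Field L] [IsAlgClosed L] [Algebra K L] (M : Matrix n n L) (i : ℕ) :
    M.charpoly.coeff i ∈
      Algebra.adjoin K ((fun k => (M ^ k).trace) '' Set.Iic (Fintype.card n)) := by
  have hdeg := M.charpoly_natDegree_eq_dim
  rcases le_or_gt i (Fintype.card n) with hi | hi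
  · rw [Polynomial.coeff_eq_esymm_roots_of_card IsAlgClosed.card_roots_eq_natDegree (hdeg ▸ hi),
      M.charpoly_monic.leadingCoeff, one_mul, hdeg]
    refine mul_mem (pow_mem (neg_mem (one_mem _)) _) ?_
    simp only [trace_pow_eq_sum_roots_charpoly]
    exact Algebra.adjoin_mono (Set.image_mono (Set.Iic_subset_Iic.2 (Nat.sub_le _ _)))
      (M.charpoly.roots.esymm_mem_adjoin_sum_map_pow _)
  · rw [Polynomial.coeff_eq_zero_of_natDegree_lt (hdeg ▸ hi)]
    exact zero_mem _

theorem charpoly_coeff_mem_adjoin_trace_pow {K R : Type*} [Field K] [CharZero K] [CommRing R]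
    [IsDomain R] [Algebra K R] (M : Matrix n n R) (i : ℕ) :
    M.charpoly.coeff i ∈
      Algebra.adjoin K ((fun k => (M ^ k).trace) '' Set.Iic (Fintype.card n)) := by
  let L := AlgebraicClosure (FractionRing R)
  have hinj : Function.Injective (algebraMap R L) := by
    rw [IsScalarTower.algebraMap_eq R (FractionRing R) L]
    exact (algebraMap (FractionRing R) L).injective.comp (IsFractionRing.injective R _)
  have hmem :=
    charpoly_coeff_mem_adjoin_trace_pow_of_isAlgClosed (K := K) (M.map (algebraMap R L)) i
  simp only [charpoly_map, Polynomial.coeff_map, ← Matrix.map_pow, ← AddMonoidHom.map_trace]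
    at hmem
  rw [← Set.image_image (algebraMap R L) (fun k => (M ^ k).trace),
    ← IsScalarTower.coe_toAlgHom' K R L, Algebra.adjoin_image] at hmem
  obtain ⟨x, hx, hxc⟩ := Subalgebra.mem_map.1 hmem
  exact hinj hxc ▸ hx

theorem exists_pow_eq_sum_smul_pow {A : Type*} [CommRing A] [Nontrivial A] (S : Subring A)
    (M : Matrix n n A)
    (hM : ∀ i, M.charpoly.coeff i ∈ S) (j : ℕ) :
    ∃ c : ℕ → A, (∀ i, c i ∈ S) ∧
      M ^ j = ∑ i ∈ Finset.range (Fintype.card n + 1), c i • M ^ i := by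
  obtain ⟨q, hq, -, hqm⟩ := Polynomial.lifts_and_natDegree_eq_and_monic (p := M.charpoly)
    ((Polynomial.lifts_iff_coeff_lifts (f := S.subtype) _).2 fun i => ⟨⟨_, hM i⟩, rfl⟩)
    M.charpoly_monic
  refine ⟨(Polynomial.X ^ j %ₘ M.charpoly).coeff, fun i => ?_, ?_⟩
  · rw [← hq, ← Polynomial.map_X S.subtype, ← Polynomial.map_pow,
      ← Polynomial.map_modByMonic _ hqm, Polynomial.coeff_map]
    exact Subtype.property _
  · have hdeg : (Polynomial.X ^ j %ₘ M.charpoly).natDegree < Fintype.card n + 1 :=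
      Nat.lt_succ_of_le ((Polynomial.natDegree_modByMonic_le _ M.charpoly_monic).trans_eq
        M.charpoly_natDegree_eq_dim)
    rw [pow_eq_aeval_mod_charpoly, Polynomial.aeval_eq_sum_range' hdeg]

end Matrix

theorem stmt_0_general (n : ℕ) (j k : ℕ) :
    trXY n j k ∈
      Algebra.adjoin ℂ {F : PolyFun n | ∃ a b : ℕ, a ≤ n ∧ b ≤ n ∧ F = trXY n a b} := by
  set T :=
    Algebra.adjoin ℂ {F : PolyFun n | ∃ a b : ℕ, a ≤ n ∧ b ≤ n ∧ F = trXY n a b}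
  have hgen : ∀ a b, a ≤ n → b ≤ n → trXY n a b ∈ T := fun a b ha hb =>
    Algebra.subset_adjoin ⟨a, b, ha, hb, rfl⟩
  have hcharpoly (M : Matrix (Fin n) (Fin n) (PolyFun n)) (hM : ∀ a ≤ n, (M ^ a).trace ∈ T)
      (i : ℕ) : M.charpoly.coeff i ∈ T.toSubring :=
    Algebra.adjoin_le (by rintro _ ⟨a, ha, rfl⟩; exact hM a (by simpa using ha))
      (M.charpoly_coeff_mem_adjoin_trace_pow i)
  obtain ⟨c, hc, hXj⟩ := (Xmat n).exists_pow_eq_sum_smul_pow T.toSubring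
    (hcharpoly _ fun a ha => by simpa [trXY] using hgen a 0 ha n.zero_le) j
  obtain ⟨d, hd, hYk⟩ := (Ymat n).exists_pow_eq_sum_smul_pow T.toSubring
    (hcharpoly _ fun b hb => by simpa [trXY] using hgen 0 b n.zero_le hb) k
  have hexpand : trXY n j k =
      ∑ a ∈ Finset.range (n + 1), ∑ b ∈ Finset.range (n + 1), c a * d b * trXY n a b := by
    rw [trXY, hXj, hYk]
    simp only [Fintype.card_fin, Finset.sum_mul, Finset.mul_sum, trace_sum, smul_mul_smul_comm,
      trace_smul, smul_eq_mul, trXY]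
    exact Finset.sum_comm
  rw [hexpand]
  exact sum_mem fun a ha => sum_mem fun b hb => mul_mem (mul_mem (hc a) (hd b))
    (hgen a b (Finset.mem_range_succ_iff.1 ha) (Finset.mem_range_succ_iff.1 hb))

/-- For all natural numbers `j`, `k`, the polynomial function
`(X,Y) ↦ tr(X^j Y^k)` belongs to the ℂ-subalgebra generated by
`{(X,Y) ↦ tr(X^a Y^b) : 0 ≤ a ≤ n, 0 ≤ b ≤ n}`. -/
theorem stmt_0 (n : ℕ) (hn : 1 ≤ n) (j k : ℕ) :
    trXY n j k ∈
      Algebra.adjoin ℂ {F : PolyFun n | ∃ a b : ℕ, a ≤ n ∧ b ≤ n ∧ F = trXY n a b} :=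
  stmt_0_general n j k
end

section
/- For all integers j, q ≥ 1, the Poisson bracket satisfies {tr A^j, tr B^q} = j·q · tr(A^{j−1} B^{q−1}) − (j·q/n) · (tr A^{j−1}) · (tr B^{q−1}) identically on M_n(ℂ) × M_n(ℂ). Moreover, for all j, k ≥ 0, {tr A^j, tr A^k} = 0 and {tr B^j, tr B^k} = 0. -/
open MvPolynomial Matrix

namespace Stmt2Aux

variable {n : ℕ}

noncomputable def Dmap (v : (Fin n × Fin n) ⊕ (Fin n × Fin n))
    (M : Matrix (Fin n) (Fin n) (PolyFun n)) : Matrix (Fin n) (Fin n) (PolyFun n) :=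
  fun i j => MvPolynomial.pderiv v (M i j)

lemma Dmap_mul (v) (M N : Matrix (Fin n) (Fin n) (PolyFun n)) :
    Dmap v (M * N) = Dmap v M * N + M * Dmap v N := by
  ext i j : 2
  simp only [Dmap, Matrix.mul_apply, Matrix.add_apply, map_sum, pderiv_mul,
    Finset.sum_add_distrib]

lemma Dmap_pow (v) (M : Matrix (Fin n) (Fin n) (PolyFun n)) (p : ℕ) :
    Dmap v (M ^ p) = ∑ i ∈ Finset.range p, M ^ i * Dmap v M * M ^ (p - 1 - i) := by
  induction p with
  | zero =>
      funext i j
      simp only [pow_zero, Finset.range_zero, Finset.sum_empty, Dmap, Matrix.zero_apply]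
      rw [Matrix.one_apply]
      split <;> simp
  | succ p ih =>
      rw [pow_succ, Dmap_mul, ih, Finset.sum_range_succ]
      congr 1
      · rw [Finset.sum_mul]
        apply Finset.sum_congr rfl
        intro i hi
        rw [mul_assoc, mul_assoc, ← pow_succ]
        have : p - 1 - i + 1 = p + 1 - 1 - i := by
          simp only [Finset.mem_range] at hi; omega
        rw [this, mul_assoc]
      · simp

lemma pderiv_trace (v) (M : Matrix (Fin n) (Fin n) (PolyFun n)) :
    MvPolynomial.pderiv v (Matrix.trace M) = Matrix.trace (Dmap v M) := by
  simp [Matrix.trace, Matrix.diag, Dmap]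

lemma trace_Dmap_pow (v) (M : Matrix (Fin n) (Fin n) (PolyFun n)) (p : ℕ) :
    Matrix.trace (Dmap v (M ^ p))
      = (p : PolyFun n) * Matrix.trace (M ^ (p - 1) * Dmap v M) := by
  rw [Dmap_pow, Matrix.trace_sum]
  have h : ∀ i ∈ Finset.range p,
      Matrix.trace (M ^ i * Dmap v M * M ^ (p - 1 - i))
        = Matrix.trace (M ^ (p - 1) * Dmap v M) := by
    intro i hi
    rw [Matrix.trace_mul_comm, ← mul_assoc, ← pow_add]
    have : p - 1 - i + i = p - 1 := by simp only [Finset.mem_range] at hi; omega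
    rw [this]
  rw [Finset.sum_congr rfl h, Finset.sum_const, Finset.card_range, nsmul_eq_mul]

lemma Dmap_inl_Amat (a b : Fin n) :
    Dmap (Sum.inl (a, b)) (Amat n)
      = Matrix.of fun i j => (if i = a ∧ j = b then (1 : PolyFun n) else 0)
          - MvPolynomial.C ((n : ℂ)⁻¹) * (if a = b then 1 else 0) * (if i = j then 1 else 0) := by
  funext i j
  have h1 : MvPolynomial.pderiv (R := ℂ) (Sum.inl (a, b) : (Fin n × Fin n) ⊕ (Fin n × Fin n))
      (Matrix.trace (Xmat n)) = (if a = b then 1 else 0) := by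
    simp only [Matrix.trace, Matrix.diag, Xmat, map_sum, pderiv_X]
    by_cases hab : a = b
    · subst hab
      rw [Finset.sum_eq_single a] <;> simp_all [Pi.single_apply, Prod.ext_iff]
    · rw [Finset.sum_eq_zero, if_neg hab]
      intro x _
      rw [Pi.single_apply, if_neg]
      simp only [Sum.inl.injEq, Prod.mk.injEq, ne_eq]
      rintro ⟨h, h'⟩; exact hab (h.symm.trans h')
  have h2 : MvPolynomial.pderiv (R := ℂ) (Sum.inl (a, b) : (Fin n × Fin n) ⊕ (Fin n × Fin n))
      (if i = j then (1 : PolyFun n) else 0) = 0 := by split <;> simp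
  simp only [Dmap, Amat, Matrix.sub_apply, Matrix.smul_apply, Matrix.one_apply, map_sub,
    smul_eq_mul, pderiv_mul, h1, h2, pderiv_C, zero_mul, mul_zero, add_zero, zero_add,
    Xmat, pderiv_X, Pi.single_apply]
  congr 1
  · simp [Sum.inl.injEq, Prod.ext_iff, and_comm, eq_comm]

lemma Dmap_inr_Bmat (a b : Fin n) :
    Dmap (Sum.inr (a, b)) (Bmat n)
      = Matrix.of fun i j => (if i = a ∧ j = b then (1 : PolyFun n) else 0)
          - MvPolynomial.C ((n : ℂ)⁻¹) * (if a = b then 1 else 0) * (if i = j then 1 else 0) := by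
  funext i j
  have h1 : MvPolynomial.pderiv (R := ℂ) (Sum.inr (a, b) : (Fin n × Fin n) ⊕ (Fin n × Fin n))
      (Matrix.trace (Ymat n)) = (if a = b then 1 else 0) := by
    simp only [Matrix.trace, Matrix.diag, Ymat, map_sum, pderiv_X]
    by_cases hab : a = b
    · subst hab
      rw [Finset.sum_eq_single a] <;> simp_all [Pi.single_apply, Prod.ext_iff]
    · rw [Finset.sum_eq_zero, if_neg hab]
      intro x _
      rw [Pi.single_apply, if_neg]
      simp only [Sum.inr.injEq, Prod.mk.injEq, ne_eq]
      rintro ⟨h, h'⟩; exact hab (h.symm.trans h')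
  have h2 : MvPolynomial.pderiv (R := ℂ) (Sum.inr (a, b) : (Fin n × Fin n) ⊕ (Fin n × Fin n))
      (if i = j then (1 : PolyFun n) else 0) = 0 := by split <;> simp
  simp only [Dmap, Bmat, Matrix.sub_apply, Matrix.smul_apply, Matrix.one_apply, map_sub,
    smul_eq_mul, pderiv_mul, h1, h2, pderiv_C, zero_mul, mul_zero, add_zero, zero_add,
    Ymat, pderiv_X, Pi.single_apply]
  congr 1
  · simp [Sum.inr.injEq, Prod.ext_iff, and_comm, eq_comm]

lemma Dmap_inr_Amat (v : Fin n × Fin n) :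
    Dmap (Sum.inr v) (Amat n) = 0 := by
  funext i j
  have h1 : MvPolynomial.pderiv (R := ℂ) (Sum.inr v : (Fin n × Fin n) ⊕ (Fin n × Fin n))
      (Matrix.trace (Xmat n)) = 0 := by
    simp [Matrix.trace, Matrix.diag, Xmat, map_sum, pderiv_X, Pi.single_apply]
  have h2 : MvPolynomial.pderiv (R := ℂ) (Sum.inr v : (Fin n × Fin n) ⊕ (Fin n × Fin n))
      (if i = j then (1 : PolyFun n) else 0) = 0 := by split <;> simp
  simp only [Dmap, Amat, Matrix.sub_apply, Matrix.smul_apply, Matrix.one_apply,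
    smul_eq_mul, Matrix.zero_apply, map_sub, Xmat, pderiv_X, Pi.single_apply,
    mul_ite, mul_one, mul_zero]
  rw [apply_ite (⇑(MvPolynomial.pderiv (R := ℂ) (Sum.inr v : (Fin n × Fin n) ⊕ (Fin n × Fin n))))]
  simp [pderiv_mul, h1]

lemma Dmap_inl_Bmat (v : Fin n × Fin n) :
    Dmap (Sum.inl v) (Bmat n) = 0 := by
  funext i j
  have h1 : MvPolynomial.pderiv (R := ℂ) (Sum.inl v : (Fin n × Fin n) ⊕ (Fin n × Fin n))
      (Matrix.trace (Ymat n)) = 0 := by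
    simp [Matrix.trace, Matrix.diag, Ymat, map_sum, pderiv_X, Pi.single_apply]
  have h2 : MvPolynomial.pderiv (R := ℂ) (Sum.inl v : (Fin n × Fin n) ⊕ (Fin n × Fin n))
      (if i = j then (1 : PolyFun n) else 0) = 0 := by split <;> simp
  simp only [Dmap, Bmat, Matrix.sub_apply, Matrix.smul_apply, Matrix.one_apply,
    smul_eq_mul, Matrix.zero_apply, map_sub, Ymat, pderiv_X, Pi.single_apply,
    mul_ite, mul_one, mul_zero]
  rw [apply_ite (⇑(MvPolynomial.pderiv (R := ℂ) (Sum.inl v : (Fin n × Fin n) ⊕ (Fin n × Fin n))))]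
  simp [pderiv_mul, h1]

lemma trA_eq (p : ℕ) : trAB n p 0 = Matrix.trace (Amat n ^ p) := by
  simp [trAB]

lemma trB_eq (q : ℕ) : trAB n 0 q = Matrix.trace (Bmat n ^ q) := by
  simp [trAB]

lemma pderiv_inr_trA (v : Fin n × Fin n) (p : ℕ) :
    MvPolynomial.pderiv (Sum.inr v) (trAB n p 0) = 0 := by
  rw [trA_eq, pderiv_trace, trace_Dmap_pow, Dmap_inr_Amat]
  simp

lemma pderiv_inl_trB (v : Fin n × Fin n) (q : ℕ) :
    MvPolynomial.pderiv (Sum.inl v) (trAB n 0 q) = 0 := by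
  rw [trB_eq, pderiv_trace, trace_Dmap_pow, Dmap_inl_Bmat]
  simp

lemma trace_mul_der (M : Matrix (Fin n) (Fin n) (PolyFun n)) (a b : Fin n) :
    Matrix.trace (M * Matrix.of fun i j => (if i = a ∧ j = b then (1 : PolyFun n) else 0)
          - MvPolynomial.C ((n : ℂ)⁻¹) * (if a = b then 1 else 0) * (if i = j then 1 else 0))
      = M b a - MvPolynomial.C ((n : ℂ)⁻¹) * (if a = b then 1 else 0) * Matrix.trace M := by
  simp only [Matrix.trace, Matrix.diag, Matrix.mul_apply, Matrix.of_apply, mul_sub,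
    Finset.sum_sub_distrib]
  congr 1
  · have h : ∀ i : Fin n, ∑ k : Fin n, M i k * (if k = a ∧ i = b then (1 : PolyFun n) else 0)
        = if i = b then M i a else 0 := by
      intro i
      simp only [mul_ite, mul_one, mul_zero, ite_and]
      rw [Finset.sum_ite_eq' Finset.univ a (fun k => if i = b then M i k else 0)]
      simp
    rw [Finset.sum_congr rfl (fun i _ => h i),
      Finset.sum_ite_eq' Finset.univ b (fun i => M i a)]
    simp
  · have h : ∀ i : Fin n, ∑ k : Fin n,
        M i k * (MvPolynomial.C ((n : ℂ)⁻¹) * (if a = b then 1 else 0) * (if k = i then 1 else 0))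
        = MvPolynomial.C ((n : ℂ)⁻¹) * (if a = b then 1 else 0) * M i i := by
      intro i
      simp only [mul_ite, mul_one, mul_zero]
      rw [Finset.sum_ite_eq' Finset.univ i
        (fun k => if a = b then M i k * MvPolynomial.C ((n : ℂ)⁻¹) else 0)]
      by_cases hab : a = b <;> simp [hab] <;> ring
    rw [Finset.sum_congr rfl (fun i _ => h i), Finset.mul_sum]

lemma pderiv_inl_trA (a b : Fin n) (p : ℕ) :
    MvPolynomial.pderiv (Sum.inl (a, b)) (trAB n p 0)
      = (p : PolyFun n) * ((Amat n ^ (p - 1)) b a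
          - MvPolynomial.C ((n : ℂ)⁻¹) * (if a = b then 1 else 0)
              * Matrix.trace (Amat n ^ (p - 1))) := by
  rw [trA_eq, pderiv_trace, trace_Dmap_pow, Dmap_inl_Amat, trace_mul_der]

lemma pderiv_inr_trB (a b : Fin n) (q : ℕ) :
    MvPolynomial.pderiv (Sum.inr (a, b)) (trAB n 0 q)
      = (q : PolyFun n) * ((Bmat n ^ (q - 1)) b a
          - MvPolynomial.C ((n : ℂ)⁻¹) * (if a = b then 1 else 0)
              * Matrix.trace (Bmat n ^ (q - 1))) := by
  rw [trB_eq, pderiv_trace, trace_Dmap_pow, Dmap_inr_Bmat, trace_mul_der]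


lemma bracket_AA (j k : ℕ) : pbracket (trAB n j 0) (trAB n k 0) = 0 := by
  unfold pbracket
  apply Finset.sum_eq_zero; intro a _
  apply Finset.sum_eq_zero; intro b _
  simp [pderiv_inr_trA]

lemma bracket_BB (j k : ℕ) : pbracket (trAB n 0 j) (trAB n 0 k) = 0 := by
  unfold pbracket
  apply Finset.sum_eq_zero; intro a _
  apply Finset.sum_eq_zero; intro b _
  simp [pderiv_inl_trB]

lemma bracket_AB (hn : 1 ≤ n) (j q : ℕ) :
    pbracket (trAB n j 0) (trAB n 0 q)
      = MvPolynomial.C ((j : ℂ) * (q : ℂ)) * trAB n (j - 1) (q - 1)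
          - MvPolynomial.C ((j : ℂ) * (q : ℂ) / (n : ℂ)) *
              (trAB n (j - 1) 0 * trAB n 0 (q - 1)) := by
  have hnne : (n : ℂ) ≠ 0 := Nat.cast_ne_zero.mpr (by omega)
  set c : PolyFun n := MvPolynomial.C ((n : ℂ)⁻¹) with hc
  set P : Matrix (Fin n) (Fin n) (PolyFun n) := Amat n ^ (j - 1) with hP
  set Q : Matrix (Fin n) (Fin n) (PolyFun n) := Bmat n ^ (q - 1) with hQ
  set tP : PolyFun n := Matrix.trace P with htP
  set tQ : PolyFun n := Matrix.trace Q with htQ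
  have hterm : ∀ a b : Fin n,
      (MvPolynomial.pderiv (Sum.inl (a, b)) (trAB n j 0)
          * MvPolynomial.pderiv (Sum.inr (b, a)) (trAB n 0 q)
        - MvPolynomial.pderiv (Sum.inr (a, b)) (trAB n j 0)
          * MvPolynomial.pderiv (Sum.inl (b, a)) (trAB n 0 q))
      = ((j : PolyFun n) * (q : PolyFun n)) * (P b a * Q a b)
          - ((j : PolyFun n) * (q : PolyFun n) * c * tQ) * (if a = b then P b a else 0)
          - ((j : PolyFun n) * (q : PolyFun n) * c * tP) * (if a = b then Q a b else 0)
          + ((j : PolyFun n) * (q : PolyFun n) * c * c * tP * tQ)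
              * (if a = b then 1 else 0) := by
    intro a b
    rw [pderiv_inl_trA, pderiv_inr_trB, pderiv_inr_trA, pderiv_inl_trB, zero_mul, sub_zero]
    by_cases hab : a = b
    · subst hab
      simp only [if_pos rfl]
      ring_nf
      simp only [if_pos trivial]
      ring
    · have hba : ¬ b = a := fun h => hab h.symm
      simp only [if_neg hab, if_neg hba]
      ring
  have hS1 : ∑ a : Fin n, ∑ b : Fin n, P b a * Q a b = Matrix.trace (P * Q) := by
    rw [Finset.sum_comm]
    simp [Matrix.trace, Matrix.diag, Matrix.mul_apply]
  have hS2 : ∑ a : Fin n, ∑ b : Fin n, (if a = b then P b a else 0) = tP := by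
    simp [Finset.sum_ite_eq, Matrix.trace, Matrix.diag, htP]
  have hS3 : ∑ a : Fin n, ∑ b : Fin n, (if a = b then Q a b else 0) = tQ := by
    simp [Finset.sum_ite_eq, Matrix.trace, Matrix.diag, htQ]
  have hS4 : ∑ a : Fin n, ∑ b : Fin n, (if a = b then (1 : PolyFun n) else 0)
      = (n : PolyFun n) := by
    simp [Finset.sum_ite_eq]
  have hcn : c * (n : PolyFun n) = 1 := by
    rw [hc, ← map_natCast (MvPolynomial.C (σ := (Fin n × Fin n) ⊕ (Fin n × Fin n)) (R := ℂ)) n,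
      ← MvPolynomial.C_mul, inv_mul_cancel₀ hnne, MvPolynomial.C_1]
  have hcast : ∀ m : ℕ, MvPolynomial.C ((m : ℂ)) = (m : PolyFun n) := fun m =>
    map_natCast _ m
  have hPQ : trAB n (j - 1) (q - 1) = Matrix.trace (P * Q) := rfl
  have hTP : trAB n (j - 1) 0 = tP := trA_eq _
  have hTQ : trAB n 0 (q - 1) = tQ := trB_eq _
  calc pbracket (trAB n j 0) (trAB n 0 q)
      = ∑ a : Fin n, ∑ b : Fin n,
          (((j : PolyFun n) * (q : PolyFun n)) * (P b a * Q a b)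
            - ((j : PolyFun n) * (q : PolyFun n) * c * tQ) * (if a = b then P b a else 0)
            - ((j : PolyFun n) * (q : PolyFun n) * c * tP) * (if a = b then Q a b else 0)
            + ((j : PolyFun n) * (q : PolyFun n) * c * c * tP * tQ)
                * (if a = b then 1 else 0)) := by
        unfold pbracket
        exact Finset.sum_congr rfl fun a _ => Finset.sum_congr rfl fun b _ => hterm a b
    _ = ((j : PolyFun n) * (q : PolyFun n)) * Matrix.trace (P * Q)
          - ((j : PolyFun n) * (q : PolyFun n) * c * tQ) * tP
          - ((j : PolyFun n) * (q : PolyFun n) * c * tP) * tQ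
          + ((j : PolyFun n) * (q : PolyFun n) * c * c * tP * tQ) * (n : PolyFun n) := by
        simp only [Finset.sum_add_distrib, Finset.sum_sub_distrib, ← Finset.mul_sum]
        rw [hS1, hS2, hS3, hS4]
    _ = _ := by
        have hjq : MvPolynomial.C ((j : ℂ) * (q : ℂ)) = (j : PolyFun n) * (q : PolyFun n) := by
          rw [MvPolynomial.C_mul, hcast, hcast]
        have h2 : MvPolynomial.C ((j : ℂ) * (q : ℂ) * ((n : ℂ))⁻¹)
            = (j : PolyFun n) * (q : PolyFun n) * c := by
          rw [MvPolynomial.C_mul, hjq, hc]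
        rw [hPQ, hTP, hTQ, div_eq_mul_inv, h2, hjq]
        linear_combination ((j : PolyFun n) * (q : PolyFun n) * c * tP * tQ) * hcn

end Stmt2Aux


/-- `{tr A^j, tr B^q} = jq tr(A^{j−1}B^{q−1}) − (jq/n) (tr A^{j−1})(tr B^{q−1})`
for `j, q ≥ 1`, identically on `M_n(ℂ) × M_n(ℂ)`; moreover
`{tr A^j, tr A^k} = 0` and `{tr B^j, tr B^k} = 0` for all `j, k ≥ 0`. -/
theorem stmt_2 (n : ℕ) (hn : 1 ≤ n) :
    (∀ j q : ℕ, 1 ≤ j → 1 ≤ q → ∀ X Y : Matrix (Fin n) (Fin n) ℂ,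
      evalP X Y (pbracket (trAB n j 0) (trAB n 0 q))
        = evalP X Y (MvPolynomial.C ((j : ℂ) * (q : ℂ)) * trAB n (j - 1) (q - 1)
            - MvPolynomial.C ((j : ℂ) * (q : ℂ) / (n : ℂ)) *
                (trAB n (j - 1) 0 * trAB n 0 (q - 1)))) ∧
    (∀ j k : ℕ, ∀ X Y : Matrix (Fin n) (Fin n) ℂ,
      evalP X Y (pbracket (trAB n j 0) (trAB n k 0)) = 0) ∧
    (∀ j k : ℕ, ∀ X Y : Matrix (Fin n) (Fin n) ℂ,
      evalP X Y (pbracket (trAB n 0 j) (trAB n 0 k)) = 0) := by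
  refine ⟨?_, ?_, ?_⟩
  · intro j q hj hq X Y
    rw [Stmt2Aux.bracket_AB hn j q]
  · intro j k X Y
    rw [Stmt2Aux.bracket_AA j k]
    simp [evalP]
  · intro j k X Y
    rw [Stmt2Aux.bracket_BB j k]
    simp [evalP]
end

section
/- For all integers j, k ≥ 0, the Poisson bracket satisfies {tr A^j B^k, tr(AB)} = (j − k) · tr(A^j B^k) identically on M_n(ℂ) × M_n(ℂ). -/
open MvPolynomial Matrix

/-! Bracketing with `tr(AB)` is the derivation `F ↦ Σ A_{jk} ∂F/∂X_{jk} − B_{jk} ∂F/∂Y_{jk}`,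
which sends the entries of `X` to those of `A` and the entries of `Y` to those of `−B`. Taking
the traceless part commutes with every `ℂ`-linear derivation, and `A`, `B` are traceless, so this
derivation sends `A ↦ A` and `B ↦ −B`. By the Leibniz rule it therefore multiplies `tr(A^j B^k)`
by `j − k`. -/

namespace Matrix

section Derivation

variable {K R : Type*} [CommSemiring K] [CommRing R] [Algebra K R] (D : Derivation K R R)

theorem map_derivation_mul {l m o : Type*} [Fintype m] (M : Matrix l m R) (N : Matrix m o R) :
    (M * N).map D = M.map D * N + M * N.map D := by
  ext i j
  simp only [map_apply, mul_apply, add_apply, map_sum, Derivation.leibniz, smul_eq_mul,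
    ← Finset.sum_add_distrib]
  exact Finset.sum_congr rfl fun _ _ => by ring

variable {ι : Type*} [DecidableEq ι]

theorem map_derivation_smul_one (s : R) :
    (s • (1 : Matrix ι ι R)).map D = D s • 1 := by
  ext i j
  rcases eq_or_ne i j with rfl | h <;> simp [*]

variable [Fintype ι]

theorem map_derivation_pow_of_map_eq_smul {M : Matrix ι ι R} {a : R} (hM : M.map D = a • M)
    (p : ℕ) : (M ^ p).map D = ((p : R) * a) • M ^ p := by
  induction p with
  | zero => simpa using map_derivation_smul_one D (1 : R)
  | succ p ih =>
    rw [pow_succ, map_derivation_mul, ih, hM, Matrix.smul_mul, Matrix.mul_smul, ← add_smul]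
    congr 1
    push_cast
    ring

theorem derivation_trace_pow_mul_pow {M N : Matrix ι ι R} {a b : R} (hM : M.map D = a • M)
    (hN : N.map D = b • N) (p q : ℕ) :
    D (trace (M ^ p * N ^ q)) = ((p : R) * a + (q : R) * b) * trace (M ^ p * N ^ q) := by
  rw [AddMonoidHom.map_trace, map_derivation_mul, map_derivation_pow_of_map_eq_smul D hM,
    map_derivation_pow_of_map_eq_smul D hN, Matrix.smul_mul, Matrix.mul_smul, trace_add,
    trace_smul, trace_smul, smul_eq_mul, smul_eq_mul, add_mul]

end Derivation

section TracelessPart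

variable (K : Type*) {R ι : Type*} [Field K] [CommRing R] [Algebra K R]
  [Fintype ι] [DecidableEq ι]

noncomputable def tracelessPart (M : Matrix ι ι R) : Matrix ι ι R :=
  M - (algebraMap K R (Fintype.card ι : K)⁻¹ * trace M) • 1

variable {K}

theorem trace_tracelessPart [CharZero K] (M : Matrix ι ι R) : trace (tracelessPart K M) = 0 := by
  rcases isEmpty_or_nonempty ι with _ | _
  -- here `(card ι)⁻¹ = 0` is a junk value, but every trace vanishes anyway
  · simp [trace]
  have hcard : (Fintype.card ι : K) ≠ 0 := Nat.cast_ne_zero.mpr Fintype.card_ne_zero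
  rw [tracelessPart, trace_sub, trace_smul, trace_one, smul_eq_mul, mul_comm _ (trace M),
    mul_assoc, ← map_natCast (algebraMap K R), ← map_mul, inv_mul_cancel₀ hcard, map_one,
    mul_one, sub_self]

theorem tracelessPart_of_trace_eq_zero {M : Matrix ι ι R} (hM : trace M = 0) :
    tracelessPart K M = M := by
  rw [tracelessPart, hM, mul_zero, zero_smul, sub_zero]

theorem map_derivation_tracelessPart (D : Derivation K R R) (M : Matrix ι ι R) :
    (tracelessPart K M).map D = tracelessPart K (M.map D) := by
  rw [tracelessPart, tracelessPart, Matrix.map_sub _ (map_sub D), map_derivation_smul_one,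
    Derivation.leibniz, Derivation.map_algebraMap, smul_zero, add_zero, smul_eq_mul,
    AddMonoidHom.map_trace]

theorem trace_mul_tracelessPart {M : Matrix ι ι R} (hM : trace M = 0) (N : Matrix ι ι R) :
    trace (M * tracelessPart K N) = trace (M * N) := by
  rw [tracelessPart, Matrix.mul_sub, trace_sub, Matrix.mul_smul, Matrix.mul_one, trace_smul, hM,
    smul_zero, sub_zero]

theorem trace_tracelessPart_mul {M : Matrix ι ι R} (hM : trace M = 0) (N : Matrix ι ι R) :
    trace (tracelessPart K N * M) = trace (N * M) := by
  rw [trace_mul_comm, trace_mul_tracelessPart hM, trace_mul_comm]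

end TracelessPart

end Matrix

theorem MvPolynomial.derivation_eq_sum_mul_pderiv {R σ : Type*} [CommSemiring R] [Fintype σ]
    (D : Derivation R (MvPolynomial σ R) (MvPolynomial σ R)) (F : MvPolynomial σ R) :
    D F = ∑ i, D (X i) * pderiv i F := by
  classical
  have sum_apply : ∀ G, (∑ i, D (X i) • pderiv i) G = ∑ i, D (X i) * pderiv i G := fun G => by
    rw [← Derivation.coeFnAddMonoidHom_apply, map_sum, Finset.sum_apply]
    rfl
  have hD : D = ∑ i, D (X i) • pderiv i :=
    derivation_ext fun j => by simp [sum_apply, pderiv_X, Pi.single_apply]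
  rw [← sum_apply, ← hD]

section PolyFun

variable {n : ℕ}

theorem Amat_eq_tracelessPart : Amat n = (Xmat n).tracelessPart ℂ := by
  rw [tracelessPart, Fintype.card_fin]
  rfl

theorem Bmat_eq_tracelessPart : Bmat n = (Ymat n).tracelessPart ℂ := by
  rw [tracelessPart, Fintype.card_fin]
  rfl

theorem trace_Amat : trace (Amat n) = 0 := by
  rw [Amat_eq_tracelessPart, trace_tracelessPart]

theorem trace_Bmat : trace (Bmat n) = 0 := by
  rw [Bmat_eq_tracelessPart, trace_tracelessPart]

theorem map_Amat (D : Derivation ℂ (PolyFun n) (PolyFun n)) :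
    (Amat n).map D = ((Xmat n).map D).tracelessPart ℂ := by
  rw [Amat_eq_tracelessPart, map_derivation_tracelessPart]

theorem map_Bmat (D : Derivation ℂ (PolyFun n) (PolyFun n)) :
    (Bmat n).map D = ((Ymat n).map D).tracelessPart ℂ := by
  rw [Bmat_eq_tracelessPart, map_derivation_tracelessPart]

theorem map_pderiv_Xmat_inl (a b : Fin n) :
    (Xmat n).map (pderiv (Sum.inl (a, b))) = single a b 1 := by
  ext i j
  simp [Xmat, pderiv_X, Pi.single_apply, single_apply, eq_comm]

theorem map_pderiv_Xmat_inr (v : Fin n × Fin n) : (Xmat n).map (pderiv (Sum.inr v)) = 0 := by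
  ext i j
  simp [Xmat]

theorem map_pderiv_Ymat_inr (a b : Fin n) :
    (Ymat n).map (pderiv (Sum.inr (a, b))) = single a b 1 := by
  ext i j
  simp [Ymat, pderiv_X, Pi.single_apply, single_apply, eq_comm]

theorem map_pderiv_Ymat_inl (v : Fin n × Fin n) : (Ymat n).map (pderiv (Sum.inl v)) = 0 := by
  ext i j
  simp [Ymat]

theorem pderiv_inl_trAB_one_one (a b : Fin n) :
    pderiv (Sum.inl (a, b)) (trAB n 1 1) = Bmat n b a := by
  rw [trAB, pow_one, pow_one, AddMonoidHom.map_trace, map_derivation_mul, map_Amat, map_Bmat,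
    map_pderiv_Xmat_inl, map_pderiv_Ymat_inl, tracelessPart_of_trace_eq_zero (trace_zero ..),
    Matrix.mul_zero, add_zero, trace_tracelessPart_mul trace_Bmat, trace_single_mul, smul_eq_mul,
    one_mul]

theorem pderiv_inr_trAB_one_one (a b : Fin n) :
    pderiv (Sum.inr (a, b)) (trAB n 1 1) = Amat n b a := by
  rw [trAB, pow_one, pow_one, AddMonoidHom.map_trace, map_derivation_mul, map_Amat, map_Bmat,
    map_pderiv_Xmat_inr, map_pderiv_Ymat_inr, tracelessPart_of_trace_eq_zero (trace_zero ..),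
    Matrix.zero_mul, zero_add, trace_mul_tracelessPart trace_Amat, trace_mul_single,
    MulOpposite.op_one, one_smul]

variable (n) in
noncomputable def scalingDerivation : Derivation ℂ (PolyFun n) (PolyFun n) :=
  mkDerivation ℂ (Sum.elim (fun p => Amat n p.1 p.2) (fun p => -Bmat n p.1 p.2))

theorem map_scalingDerivation_Amat :
    (Amat n).map (scalingDerivation n) = (1 : PolyFun n) • Amat n := by
  have hX : (Xmat n).map (scalingDerivation n) = Amat n := by
    ext i j
    simp [Xmat, scalingDerivation, mkDerivation_X]
  rw [map_Amat, hX, tracelessPart_of_trace_eq_zero trace_Amat, one_smul]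

theorem map_scalingDerivation_Bmat :
    (Bmat n).map (scalingDerivation n) = (-1 : PolyFun n) • Bmat n := by
  have hY : (Ymat n).map (scalingDerivation n) = -Bmat n := by
    ext i j
    simp [Ymat, scalingDerivation, mkDerivation_X]
  rw [map_Bmat, hY, tracelessPart_of_trace_eq_zero (by rw [trace_neg, trace_Bmat, neg_zero]),
    neg_one_smul]

theorem pbracket_trAB_one_one (F : PolyFun n) :
    pbracket F (trAB n 1 1) = scalingDerivation n F := by
  rw [derivation_eq_sum_mul_pderiv, Fintype.sum_sum_type, Fintype.sum_prod_type,
    Fintype.sum_prod_type, pbracket]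
  simp only [scalingDerivation, mkDerivation_X, Sum.elim_inl, Sum.elim_inr,
    pderiv_inl_trAB_one_one, pderiv_inr_trAB_one_one, ← Finset.sum_add_distrib]
  refine Finset.sum_congr rfl fun _ _ => Finset.sum_congr rfl fun _ _ => ?_
  ring

theorem pbracket_trAB_trAB_one_one (p q : ℕ) :
    pbracket (trAB n p q) (trAB n 1 1) = C ((p : ℂ) - q) * trAB n p q := by
  rw [pbracket_trAB_one_one, trAB, derivation_trace_pow_mul_pow _ map_scalingDerivation_Amat
    map_scalingDerivation_Bmat, map_sub, map_natCast, map_natCast, mul_one, mul_neg_one,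
    sub_eq_add_neg]

end PolyFun

theorem stmt_3_general (n : ℕ) (j k : ℕ) (X Y : Matrix (Fin n) (Fin n) ℂ) :
    evalP X Y (pbracket (trAB n j k) (trAB n 1 1))
      = evalP X Y (MvPolynomial.C ((j : ℂ) - (k : ℂ)) * trAB n j k) := by
  rw [pbracket_trAB_trAB_one_one]

/-- `{tr A^j B^k, tr(AB)} = (j − k) tr(A^j B^k)` identically on
`M_n(ℂ) × M_n(ℂ)`, for all `j, k ≥ 0`. -/
theorem stmt_3 (n : ℕ) (hn : 1 ≤ n) (j k : ℕ) (X Y : Matrix (Fin n) (Fin n) ℂ) :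
    evalP X Y (pbracket (trAB n j k) (trAB n 1 1))
      = evalP X Y (MvPolynomial.C ((j : ℂ) - (k : ℂ)) * trAB n j k) :=
  stmt_3_general n j k X Y
end

section
/- In the ring ℂ[z, w, w⁻¹] of polynomials in z that are Laurent polynomials in w, equipped with the Poisson bracket {f, g} = w·((∂f/∂z)(∂g/∂w) − (∂f/∂w)(∂g/∂z)), the smallest ℂ-linear subspace containing all monomials z^j (j ∈ ℕ) and w^k (k ∈ ℤ, k ≠ 0) and closed under the bracket is the whole ring ℂ[z, w, w⁻¹]. -/
/-- The ring `ℂ[z, w, w⁻¹]` of polynomials in `z` that are Laurent polynomials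
in `w`, modelled as the monoid algebra of `ℕ × ℤ`: the monomial `z^j w^k`
corresponds to `single (j, k) 1`. -/
abbrev PLaurent : Type := AddMonoidAlgebra ℂ (ℕ × ℤ)

/-- The monomial `z^j w^k`. -/
noncomputable def zw (j : ℕ) (k : ℤ) : PLaurent := AddMonoidAlgebra.single (j, k) 1

/-- The formal partial derivative `∂/∂z`. -/
noncomputable def Dz (f : PLaurent) : PLaurent :=
  Finsupp.sum f.coeff fun p c => AddMonoidAlgebra.single (p.1 - 1, p.2) (c * (p.1 : ℂ))

/-- The formal partial derivative `∂/∂w`. -/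
noncomputable def Dw (f : PLaurent) : PLaurent :=
  Finsupp.sum f.coeff fun p c => AddMonoidAlgebra.single (p.1, p.2 - 1) (c * (p.2 : ℂ))

/-- The Poisson bracket `{f,g} = w (f_z g_w − f_w g_z)`. -/
noncomputable def pbL (f g : PLaurent) : PLaurent :=
  zw 0 1 * (Dz f * Dw g - Dw f * Dz g)

/-- The smallest ℂ-linear subspace of `ℂ[z,w,w⁻¹]` containing all monomials
`z^j` (`j ∈ ℕ`) and `w^k` (`k ∈ ℤ`, `k ≠ 0`) and closed under the bracket. -/
inductive GenL : PLaurent → Prop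
  | zpow (j : ℕ) : GenL (zw j 0)
  | wpow (k : ℤ) : k ≠ 0 → GenL (zw 0 k)
  | zero : GenL 0
  | add {f g} : GenL f → GenL g → GenL (f + g)
  | smul (c : ℂ) {f} : GenL f → GenL (c • f)
  | bracket {f g} : GenL f → GenL g → GenL (pbL f g)

/-! Since `{z^(j+1), w^k} = (j+1) k z^j w^k`, every monomial `z^j w^k` with `k ≠ 0` is a nonzero
multiple of a bracket of generators; those with `k = 0` are generators, and monomials span. -/

open AddMonoidAlgebra

lemma Dz_single (j : ℕ) (k : ℤ) (c : ℂ) :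
    Dz (single (j, k) c) = single (j - 1, k) (c * j) := by
  simp [Dz]

lemma Dw_single (j : ℕ) (k : ℤ) (c : ℂ) :
    Dw (single (j, k) c) = single (j, k - 1) (c * k) := by
  simp [Dw]

lemma pbL_zw_succ_zw_zero (j : ℕ) (k : ℤ) :
    pbL (zw (j + 1) 0) (zw 0 k) = single (j, k) (((j : ℂ) + 1) * k) := by
  simp only [pbL, zw, Dz_single, Dw_single, Nat.cast_zero, Int.cast_zero, mul_zero, single_zero,
    sub_zero, single_mul_single]
  congr 1
  · ext <;> simp
  · push_cast; ring

lemma genL_single (j : ℕ) (k : ℤ) (c : ℂ) : GenL (single (j, k) c) := by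
  rcases eq_or_ne k 0 with rfl | hk
  · simpa [zw] using GenL.smul c (GenL.zpow j)
  · have hcoeff : ((j : ℂ) + 1) * k ≠ 0 :=
      mul_ne_zero (Nat.cast_add_one_ne_zero j) (by exact_mod_cast hk)
    have hbracket := GenL.smul (c / (((j : ℂ) + 1) * k))
      (GenL.bracket (GenL.zpow (j + 1)) (GenL.wpow k hk))
    rwa [pbL_zw_succ_zw_zero, smul_single', div_mul_cancel₀ c hcoeff] at hbracket

/-- this subspace is the whole ring `ℂ[z, w, w⁻¹]`. -/
theorem stmt_14 (f : PLaurent) : GenL f := by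
  induction f using AddMonoidAlgebra.induction with
  | zero => exact GenL.zero
  | single_add p c f _ _ ih => exact GenL.add (genL_single p.1 p.2 c) ih
end
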